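/- (Backtracking sum estimate.) Let d ≥ 2, v ∈ ℝ^d with v ≠ 0, γ = 3/|v|, b > 0, and let ℓ' be a unit vector with v·ℓ' > 0. Set V_{ℓ',b,L} = {x : −bL < x·ℓ' < L, |Π_{ℓ'}(x)| < L²} and V⁻ = {x ∈ V_{ℓ',b,L} : x·ℓ' < −bL/2}. Then: (i) for every integer n ≥ 1 and every y ∈ V⁻, |y − nv| ≥ bL/2; and (ii) for every c₂ > 0 there is a constant c depending only on b, d, c₂, |v| such that for all L ≥ 1: Σ_{n=1}^{⌊γL⌋} ∫_{V⁻} c₂ n^{−d/2} exp(−|y − nv|²/(c₂ n)) dy ≤ c L^{2d} exp(−b²L/(4 c₂ γ)). -/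

import Mathlib

/-! On `V⁻` the unit vector `ℓ'` separates `y` from every point `t • v` with `t ≥ 0` by more
than `bL/2`, because `⟪y, ℓ'⟫ < -bL/2` while `⟪t • v, ℓ'⟫ ≥ 0`. So for
`1 ≤ n ≤ γL` each Gaussian integrand is at most `c₂ exp(-b²L/(4c₂γ))`. There are at most `γL`
terms, and `V⁻` fits in a box of volume `(1 + b)L (2L²)^(d-1)` taken in an orthonormal frame
containing `ℓ'`; multiplying out gives the power `L^(2d)`. -/

open MeasureTheory Set
open scoped RealInnerProductSpace

noncomputable section

abbrev EucSp (d : ℕ) : Type := EuclideanSpace ℝ (Fin d)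

/-- the bounded approximation `V_{ℓ',b,L}` of the slab, with cylinder radius `ρ`. -/
def cyl {d : ℕ} (ℓ' : EucSp d) (b L ρ : ℝ) : Set (EucSp d) :=
  {x | -(b * L) < ⟪x, ℓ'⟫ ∧ ⟪x, ℓ'⟫ < L ∧ ‖x - ⟪x, ℓ'⟫ • ℓ'‖ < ρ}

/-- the backtracked part `V⁻` of `V_{ℓ',b,L}`. -/
def Vminus {d : ℕ} (ℓ' : EucSp d) (b L : ℝ) : Set (EucSp d) :=
  {x ∈ cyl ℓ' b L (L ^ 2) | ⟪x, ℓ'⟫ < -(b * L) / 2}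

theorem OrthonormalBasis.volume_setOf_repr_mem {ι F : Type*} [Fintype ι] [NormedAddCommGroup F]
    [InnerProductSpace ℝ F] [FiniteDimensional ℝ F] [MeasurableSpace F] [BorelSpace F]
    (bas : OrthonormalBasis ι ℝ F) (s : ι → Set ℝ) :
    volume {x | ∀ i, bas.repr x i ∈ s i} = ∏ i, volume (s i) := by
  let e := bas.measurableEquiv.trans (MeasurableEquiv.toLp 2 (ι → ℝ)).symm
  have he : MeasurePreserving e :=
    (EuclideanSpace.volume_preserving_symm_measurableEquiv_toLp ι).comp
      bas.measurePreserving_measurableEquiv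
  rw [← volume_pi_pi, ← he.measure_preimage_equiv]
  congr 1
  ext x
  simp [e, OrthonormalBasis.measurableEquiv]

theorem abs_inner_le_norm_mul_norm_sub_inner_smul {E : Type*} [NormedAddCommGroup E]
    [InnerProductSpace ℝ E] {u ℓ : E} (h : ⟪u, ℓ⟫ = 0) (x : E) :
    |⟪u, x⟫| ≤ ‖u‖ * ‖x - ⟪x, ℓ⟫ • ℓ‖ := by
  have : ⟪u, x⟫ = ⟪u, x - ⟪x, ℓ⟫ • ℓ⟫ := by
    rw [inner_sub_right, real_inner_smul_right, h, mul_zero, sub_zero]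
  rw [this]
  exact abs_real_inner_le_norm _ _

theorem cyl_subset_setOf_repr_mem {d : ℕ} {ι : Type*} [Fintype ι] [DecidableEq ι]
    (bas : OrthonormalBasis ι ℝ (EucSp d)) {i₀ : ι} {ℓ' : EucSp d} (hi₀ : bas i₀ = ℓ')
    (b L ρ : ℝ) :
    cyl ℓ' b L ρ ⊆
      {x | ∀ i, bas.repr x i ∈ if i = i₀ then Icc (-(b * L)) L else Icc (-ρ) ρ} := by
  rintro x ⟨hx₁, hx₂, hx₃⟩ i
  rw [bas.repr_apply_apply]
  split_ifs with hi
  · rw [hi, hi₀, real_inner_comm]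
    exact ⟨hx₁.le, hx₂.le⟩
  · have horth : ⟪bas i, ℓ'⟫ = 0 := hi₀ ▸ bas.orthonormal.2 hi
    refine abs_le.mp ((abs_inner_le_norm_mul_norm_sub_inner_smul horth x).trans ?_)
    rw [bas.orthonormal.1 i, one_mul]
    exact hx₃.le

theorem volume_cyl_le {d : ℕ} {ℓ' : EucSp d} (hℓ : ‖ℓ'‖ = 1) (b L ρ : ℝ)
    (hbL : 0 ≤ L + b * L) (hρ : 0 ≤ ρ) :
    volume (cyl ℓ' b L ρ) ≤ ENNReal.ofReal ((L + b * L) * (2 * ρ) ^ (d - 1)) := by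
  classical
  have hℓ_orth : Orthonormal ℝ ((↑) : ({ℓ'} : Set (EucSp d)) → EucSp d) := by
    rw [orthonormal_subtype_iff_ite]
    rintro _ rfl _ rfl
    simp [hℓ]
  obtain ⟨u, bas, hℓu, hbas⟩ := hℓ_orth.exists_orthonormalBasis_extension
  let i₀ : u := ⟨ℓ', hℓu rfl⟩
  have hi₀ : bas i₀ = ℓ' := by rw [hbas]
  have hcard : Fintype.card u = d := by
    simpa using (Module.finrank_eq_card_basis bas.toBasis).symm
  have hvol : ∀ i, volume (if i = i₀ then Icc (-(b * L)) L else Icc (-ρ) ρ) =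
      if i = i₀ then ENNReal.ofReal (L + b * L) else ENNReal.ofReal (2 * ρ) := by
    intro i
    split_ifs <;> rw [Real.volume_Icc] <;> ring_nf
  refine (measure_mono (cyl_subset_setOf_repr_mem bas hi₀ b L ρ)).trans_eq ?_
  simp only [bas.volume_setOf_repr_mem, hvol, Finset.prod_ite, Finset.filter_eq',
    Finset.filter_ne', Finset.mem_univ, if_true, Finset.card_singleton, pow_one,
    Finset.prod_const, Finset.card_erase_of_mem, Finset.card_univ, hcard]
  rw [ENNReal.ofReal_mul hbL, ENNReal.ofReal_pow (by linarith)]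

theorem half_mul_le_norm_sub_smul_of_mem_Vminus {d : ℕ} {ℓ' v y : EucSp d} {b L t : ℝ}
    (hℓ : ‖ℓ'‖ = 1) (hvℓ : 0 ≤ ⟪v, ℓ'⟫) (ht : 0 ≤ t) (hy : y ∈ Vminus ℓ' b L) :
    b * L / 2 ≤ ‖y - t • v‖ := by
  have hinner : ⟪y - t • v, ℓ'⟫ < -(b * L) / 2 := by
    rw [inner_sub_left, real_inner_smul_left]
    linarith [hy.2, mul_nonneg ht hvℓ]
  have hnorm : |⟪y - t • v, ℓ'⟫| ≤ ‖y - t • v‖ := by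
    simpa [hℓ] using abs_real_inner_le_norm (y - t • v) ℓ'
  linarith [neg_abs_le ⟪y - t • v, ℓ'⟫]

theorem volume_Vminus_le {d : ℕ} {ℓ' : EucSp d} (hℓ : ‖ℓ'‖ = 1) {b L : ℝ} (hb : 0 ≤ b)
    (hL : 0 ≤ L) :
    volume (Vminus ℓ' b L) ≤ ENNReal.ofReal ((L + b * L) * (2 * L ^ 2) ^ (d - 1)) :=
  (measure_mono (sep_subset _ _)).trans
    (volume_cyl_le hℓ b L (L ^ 2) (by positivity) (by positivity))

theorem mul_rpow_mul_exp_neg_sq_div_le {c n T r s p : ℝ} (hc : 0 < c) (hn : 1 ≤ n) (hnT : n ≤ T)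
    (hr : 0 ≤ r) (hrs : r ≤ s) (hp : p ≤ 0) :
    c * n ^ p * Real.exp (-s ^ 2 / (c * n)) ≤ c * Real.exp (-r ^ 2 / (c * T)) := by
  have hrpow : n ^ p ≤ 1 := Real.rpow_le_one_of_one_le_of_nonpos hn hp
  have hexp : -s ^ 2 / (c * n) ≤ -r ^ 2 / (c * T) := by
    rw [neg_div, neg_div, neg_le_neg_iff]
    gcongr
  calc c * n ^ p * Real.exp (-s ^ 2 / (c * n)) ≤ c * 1 * Real.exp (-r ^ 2 / (c * T)) := by
        gcongr
    _ = c * Real.exp (-r ^ 2 / (c * T)) := by rw [mul_one]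

theorem gaussian_term_le_of_mem_Vminus {d : ℕ} {ℓ' v y : EucSp d} {b L c γ : ℝ} {n : ℕ}
    (hℓ : ‖ℓ'‖ = 1) (hvℓ : 0 ≤ ⟪v, ℓ'⟫) (hb : 0 ≤ b) (hL : 0 < L) (hc : 0 < c) (hn : 1 ≤ n)
    (hnγ : n ≤ γ * L) (hy : y ∈ Vminus ℓ' b L) :
    c * (n : ℝ) ^ (-(d : ℝ) / 2) * Real.exp (-‖y - (n : ℝ) • v‖ ^ 2 / (c * n)) ≤
      c * Real.exp (-(b ^ 2 * L) / (4 * c * γ)) := by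
  have hn₁ : (1 : ℝ) ≤ n := Nat.one_le_cast.mpr hn
  have hγ : 0 < γ := pos_of_mul_pos_left (by linarith) hL.le
  have hexponent : -(b ^ 2 * L) / (4 * c * γ) = -(b * L / 2) ^ 2 / (c * (γ * L)) := by
    field_simp
    ring
  rw [hexponent]
  exact mul_rpow_mul_exp_neg_sq_div_le hc hn₁ hnγ (by positivity)
    (half_mul_le_norm_sub_smul_of_mem_Vminus hℓ hvℓ n.cast_nonneg hy)
    (by linarith [(Nat.cast_nonneg d : (0 : ℝ) ≤ d)])

theorem sum_setIntegral_le_card_mul {X ι : Type*} [MeasurableSpace X] {μ : Measure X} {s : Set X}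
    (hs : μ s < ⊤) (I : Finset ι) (f : ι → X → ℝ) {C : ℝ} (hf : ∀ i ∈ I, ∀ x ∈ s, ‖f i x‖ ≤ C) :
    ∑ i ∈ I, ∫ x in s, f i x ∂μ ≤ I.card * (C * μ.real s) := by
  rw [← nsmul_eq_mul]
  refine Finset.sum_le_card_nsmul _ _ _ fun i hi => ?_
  exact (le_abs_self _).trans (norm_setIntegral_le_of_norm_le_const hs (hf i hi))

theorem backtracking_sum_estimate (d : ℕ) (hd : 2 ≤ d) (v : EucSp d) (hv : v ≠ 0)
    (b : ℝ) (hb : 0 < b) :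
    -- (i)
    (∀ ℓ' : EucSp d, ‖ℓ'‖ = 1 → 0 < ⟪v, ℓ'⟫ →
      ∀ L > (0:ℝ), ∀ n : ℕ, 1 ≤ n → ∀ y ∈ Vminus ℓ' b L,
        b * L / 2 ≤ ‖y - (n : ℝ) • v‖) ∧
    -- (ii)
    (∀ c₂ > (0:ℝ), ∃ c > (0:ℝ),
      ∀ ℓ' : EucSp d, ‖ℓ'‖ = 1 → 0 < ⟪v, ℓ'⟫ →
      ∀ L ≥ (1:ℝ),
        ∑ n ∈ Finset.Icc 1 ⌊3 / ‖v‖ * L⌋₊,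
            ∫ y in Vminus ℓ' b L,
              c₂ * (n : ℝ) ^ (-(d : ℝ) / 2) *
                Real.exp (-‖y - (n : ℝ) • v‖ ^ 2 / (c₂ * n)) ≤
          c * L ^ (2 * (d : ℝ)) * Real.exp (-(b ^ 2 * L) / (4 * c₂ * (3 / ‖v‖)))) := by
  refine ⟨fun ℓ' hℓ hvℓ L _ n _ y hy =>
    half_mul_le_norm_sub_smul_of_mem_Vminus hℓ hvℓ.le n.cast_nonneg hy, fun c₂ hc₂ => ?_⟩
  set γ := 3 / ‖v‖
  have hγ : 0 < γ := div_pos three_pos (norm_pos_iff.mpr hv)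
  refine ⟨γ * c₂ * (1 + b) * 2 ^ (d - 1), by positivity, fun ℓ' hℓ hvℓ L hL => ?_⟩
  set E := Real.exp (-(b ^ 2 * L) / (4 * c₂ * γ))
  have hvol := volume_Vminus_le hℓ hb.le (zero_le_one.trans hL)
  have hterm : ∀ n ∈ Finset.Icc 1 ⌊γ * L⌋₊, ∀ y ∈ Vminus ℓ' b L,
      ‖c₂ * (n : ℝ) ^ (-(d : ℝ) / 2) * Real.exp (-‖y - (n : ℝ) • v‖ ^ 2 / (c₂ * n))‖ ≤ c₂ * E := by
    intro n hn y hy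
    rw [Real.norm_of_nonneg (by positivity)]
    exact gaussian_term_le_of_mem_Vminus hℓ hvℓ.le hb.le (by positivity) hc₂
      (Finset.mem_Icc.mp hn).1 ((Nat.cast_le.mpr (Finset.mem_Icc.mp hn).2).trans
        (Nat.floor_le (by positivity))) hy
  calc _ ≤ ⌊γ * L⌋₊ * (c₂ * E * volume.real (Vminus ℓ' b L)) := by
        simpa using sum_setIntegral_le_card_mul (hvol.trans_lt ENNReal.ofReal_lt_top) _ _ hterm
    _ ≤ γ * L * (c₂ * E * ((L + b * L) * (2 * L ^ 2) ^ (d - 1))) := by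
        gcongr
        · exact Nat.floor_le (by positivity)
        · exact ENNReal.toReal_le_of_le_ofReal (by positivity) hvol
    _ = γ * c₂ * (1 + b) * 2 ^ (d - 1) * L ^ (2 * (d : ℝ)) * E := by
        obtain ⟨k, rfl⟩ := Nat.exists_eq_add_of_le' (one_le_two.trans hd)
        rw [show 2 * ((k + 1 : ℕ) : ℝ) = ((2 * (k + 1) : ℕ) : ℝ) by push_cast; ring,
          Real.rpow_natCast, Nat.add_sub_cancel]
        ring

end
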